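/- In any cut-free derivation in !L* of a sequent of size n in which ! is applied only to variables, the number of applications of logical rules ((/→), (→/), (\→), (→\), (!→), (→!)) is less than n. -/
import Mathlib


/-- Formulae (types) of the Lambek calculus with a modality:
`var` = primitive type, `div B A` = B / A, `ldiv A B` = A \ B, `bang A` = !A. -/
inductive Fm : Type
  | var : ℕ → Fm
  | div : Fm → Fm → Fm
  | ldiv : Fm → Fm → Fm
  | bang : Fm → Fm
  deriving DecidableEq

open Fm

/-- The size of a formula: the total number of variable and connective occurrences. -/
def Fm.size : Fm → ℕ
  | var _ => 1
  | div a b => a.size + b.size + 1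
  | ldiv a b => a.size + b.size + 1
  | bang a => a.size + 1

/-- The size of a sequent Φ → C. -/
def seqSize (Φ : List Fm) (C : Fm) : ℕ := (Φ.map Fm.size).sum + C.size

/-- `!` is applied only to variables (primitive types) in the formula. -/
def bangVar : Fm → Prop
  | var _ => True
  | div a b => bangVar a ∧ bangVar b
  | ldiv a b => bangVar a ∧ bangVar b
  | bang a => ∃ n : ℕ, a = var n

/-- Cut-free derivation trees in !L*. -/
inductive BangD : List Fm → Fm → Type
  | ax (A : Fm) : BangD [A] A
  | divL (Γ Δ₁ Δ₂ : List Fm) (A B C : Fm) :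
      BangD Γ A → BangD (Δ₁ ++ B :: Δ₂) C →
      BangD (Δ₁ ++ div B A :: (Γ ++ Δ₂)) C
  | divR (Γ : List Fm) (A B : Fm) :
      BangD (Γ ++ [A]) B → BangD Γ (div B A)
  | ldivL (Γ Δ₁ Δ₂ : List Fm) (A B C : Fm) :
      BangD Γ A → BangD (Δ₁ ++ B :: Δ₂) C →
      BangD (Δ₁ ++ Γ ++ ldiv A B :: Δ₂) C
  | ldivR (Γ : List Fm) (A B : Fm) :
      BangD (A :: Γ) B → BangD Γ (ldiv A B)
  | bangL (Γ₁ Γ₂ : List Fm) (A C : Fm) :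
      BangD (Γ₁ ++ A :: Γ₂) C → BangD (Γ₁ ++ bang A :: Γ₂) C
  | bangR (Γ : List Fm) (B : Fm) :
      BangD (Γ.map bang) B → BangD (Γ.map bang) (bang B)
  | perm1 (Δ₁ Γ Δ₂ : List Fm) (A C : Fm) :
      BangD (Δ₁ ++ bang A :: (Γ ++ Δ₂)) C → BangD (Δ₁ ++ Γ ++ bang A :: Δ₂) C
  | perm2 (Δ₁ Γ Δ₂ : List Fm) (A C : Fm) :
      BangD (Δ₁ ++ Γ ++ bang A :: Δ₂) C → BangD (Δ₁ ++ bang A :: (Γ ++ Δ₂)) C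
  | contr (Δ₁ Δ₂ : List Fm) (A C : Fm) :
      BangD (Δ₁ ++ bang A :: bang A :: Δ₂) C → BangD (Δ₁ ++ bang A :: Δ₂) C

/-- Number of applications of logical rules (all rules except permutation and contraction). -/
def BangD.logicalCount : ∀ {Φ : List Fm} {C : Fm}, BangD Φ C → ℕ
  | _, _, BangD.ax _ => 0
  | _, _, BangD.divL _ _ _ _ _ _ d e => d.logicalCount + e.logicalCount + 1
  | _, _, BangD.divR _ _ _ d => d.logicalCount + 1
  | _, _, BangD.ldivL _ _ _ _ _ _ d e => d.logicalCount + e.logicalCount + 1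
  | _, _, BangD.ldivR _ _ _ d => d.logicalCount + 1
  | _, _, BangD.bangL _ _ _ _ d => d.logicalCount + 1
  | _, _, BangD.bangR _ _ d => d.logicalCount + 1
  | _, _, BangD.perm1 _ _ _ _ _ d => d.logicalCount
  | _, _, BangD.perm2 _ _ _ _ _ d => d.logicalCount
  | _, _, BangD.contr _ _ _ _ d => d.logicalCount

/-- Number of applications of the contraction rule. -/
def BangD.contrCount : ∀ {Φ : List Fm} {C : Fm}, BangD Φ C → ℕ
  | _, _, BangD.ax _ => 0
  | _, _, BangD.divL _ _ _ _ _ _ d e => d.contrCount + e.contrCount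
  | _, _, BangD.divR _ _ _ d => d.contrCount
  | _, _, BangD.ldivL _ _ _ _ _ _ d e => d.contrCount + e.contrCount
  | _, _, BangD.ldivR _ _ _ d => d.contrCount
  | _, _, BangD.bangL _ _ _ _ d => d.contrCount
  | _, _, BangD.bangR _ _ d => d.contrCount
  | _, _, BangD.perm1 _ _ _ _ _ d => d.contrCount
  | _, _, BangD.perm2 _ _ _ _ _ d => d.contrCount
  | _, _, BangD.contr _ _ _ _ d => d.contrCount + 1

/-- The total size of a derivation: the number of axiom instances and rule
applications (i.e. of sequent occurrences) in it. -/
def BangD.dsize : ∀ {Φ : List Fm} {C : Fm}, BangD Φ C → ℕ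
  | _, _, BangD.ax _ => 1
  | _, _, BangD.divL _ _ _ _ _ _ d e => d.dsize + e.dsize + 1
  | _, _, BangD.divR _ _ _ d => d.dsize + 1
  | _, _, BangD.ldivL _ _ _ _ _ _ d e => d.dsize + e.dsize + 1
  | _, _, BangD.ldivR _ _ _ d => d.dsize + 1
  | _, _, BangD.bangL _ _ _ _ d => d.dsize + 1
  | _, _, BangD.bangR _ _ d => d.dsize + 1
  | _, _, BangD.perm1 _ _ _ _ _ d => d.dsize + 1
  | _, _, BangD.perm2 _ _ _ _ _ d => d.dsize + 1
  | _, _, BangD.contr _ _ _ _ d => d.dsize + 1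


lemma Fm.one_le_size (A : Fm) : 1 ≤ A.size := by
  induction A <;> simp [Fm.size]

lemma key : ∀ {Φ : List Fm} {C : Fm} (d : BangD Φ C),
    (∀ F ∈ C :: Φ, bangVar F) →
    d.logicalCount + 2 * Φ.length + (if Φ = [] then 1 else 0) ≤ seqSize Φ C := by
  intro Φ C d
  induction d with
  | ax A =>
      intro h
      have := Fm.one_le_size A
      simp [BangD.logicalCount, seqSize]
      omega
  | divL Γ Δ₁ Δ₂ A B C d e ihd ihe =>
      intro h
      have hdiv : bangVar (div B A) := h _ (by simp)
      have h1 : ∀ F ∈ A :: Γ, bangVar F := by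
        intro F hF
        rcases List.mem_cons.mp hF with rfl | hF
        · exact hdiv.2
        · exact h F (by simp [hF])
      have h2 : ∀ F ∈ C :: (Δ₁ ++ B :: Δ₂), bangVar F := by
        intro F hF
        rcases List.mem_cons.mp hF with rfl | hF
        · exact h _ (by simp)
        · rcases List.mem_append.mp hF with hF | hF
          · exact h F (by simp [hF])
          · rcases List.mem_cons.mp hF with rfl | hF
            · exact hdiv.1
            · exact h F (by simp [hF])
      have i1 := ihd h1
      have i2 := ihe h2
      simp [BangD.logicalCount, seqSize, Fm.size, List.map_append, List.sum_append] at i1 i2 ⊢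
      split at i1 <;> omega
  | divR Γ A B d ih =>
      intro h
      have hdiv : bangVar (div B A) := h _ (by simp)
      have h1 : ∀ F ∈ B :: (Γ ++ [A]), bangVar F := by
        intro F hF
        rcases List.mem_cons.mp hF with rfl | hF
        · exact hdiv.1
        · rcases List.mem_append.mp hF with hF | hF
          · exact h F (by simp [hF])
          · simp at hF; subst hF; exact hdiv.2
      have i1 := ih h1
      simp [BangD.logicalCount, seqSize, Fm.size, List.map_append, List.sum_append] at i1 ⊢
      split <;> omega
  | ldivL Γ Δ₁ Δ₂ A B C d e ihd ihe =>
      intro h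
      have hdiv : bangVar (ldiv A B) := h _ (by simp)
      have h1 : ∀ F ∈ A :: Γ, bangVar F := by
        intro F hF
        rcases List.mem_cons.mp hF with rfl | hF
        · exact hdiv.1
        · exact h F (by simp [hF])
      have h2 : ∀ F ∈ C :: (Δ₁ ++ B :: Δ₂), bangVar F := by
        intro F hF
        rcases List.mem_cons.mp hF with rfl | hF
        · exact h _ (by simp)
        · rcases List.mem_append.mp hF with hF | hF
          · exact h F (by simp [hF])
          · rcases List.mem_cons.mp hF with rfl | hF
            · exact hdiv.2
            · exact h F (by simp [hF])
      have i1 := ihd h1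
      have i2 := ihe h2
      simp [BangD.logicalCount, seqSize, Fm.size, List.map_append, List.sum_append] at i1 i2 ⊢
      split at i1 <;> omega
  | ldivR Γ A B d ih =>
      intro h
      have hdiv : bangVar (ldiv A B) := h _ (by simp)
      have h1 : ∀ F ∈ B :: (A :: Γ), bangVar F := by
        intro F hF
        rcases List.mem_cons.mp hF with rfl | hF
        · exact hdiv.2
        · rcases List.mem_cons.mp hF with rfl | hF
          · exact hdiv.1
          · exact h F (by simp [hF])
      have i1 := ih h1
      simp [BangD.logicalCount, seqSize, Fm.size] at i1 ⊢
      split <;> omega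
  | bangL Γ₁ Γ₂ A C d ih =>
      intro h
      have hbang : bangVar (bang A) := h _ (by simp)
      obtain ⟨n, rfl⟩ := hbang
      have h1 : ∀ F ∈ C :: (Γ₁ ++ var n :: Γ₂), bangVar F := by
        intro F hF
        rcases List.mem_cons.mp hF with rfl | hF
        · exact h _ (by simp)
        · rcases List.mem_append.mp hF with hF | hF
          · exact h F (by simp [hF])
          · rcases List.mem_cons.mp hF with rfl | hF
            · trivial
            · exact h F (by simp [hF])
      have i1 := ih h1
      simp [BangD.logicalCount, seqSize, Fm.size, List.map_append, List.sum_append] at i1 ⊢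
      omega
  | bangR Γ B d ih =>
      intro h
      have hbang : bangVar (bang B) := h _ (by simp)
      obtain ⟨n, rfl⟩ := hbang
      have h1 : ∀ F ∈ var n :: (Γ.map bang), bangVar F := by
        intro F hF
        rcases List.mem_cons.mp hF with rfl | hF
        · trivial
        · exact h F (by simp [hF])
      have i1 := ih h1
      rcases Γ with _ | ⟨x, Γ⟩
      · simp [BangD.logicalCount, seqSize, Fm.size] at i1 ⊢
        omega
      · simp [BangD.logicalCount, seqSize, Fm.size] at i1 ⊢
        omega
  | perm1 Δ₁ Γ Δ₂ A C d ih =>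
      intro h
      have h1 : ∀ F ∈ C :: (Δ₁ ++ bang A :: (Γ ++ Δ₂)), bangVar F := by
        intro F hF; apply h
        simp at hF ⊢; tauto
      have i1 := ih h1
      simp [BangD.logicalCount, seqSize, Fm.size, List.map_append, List.sum_append] at i1 ⊢
      omega
  | perm2 Δ₁ Γ Δ₂ A C d ih =>
      intro h
      have h1 : ∀ F ∈ C :: (Δ₁ ++ Γ ++ bang A :: Δ₂), bangVar F := by
        intro F hF; apply h
        simp at hF ⊢; tauto
      have i1 := ih h1
      simp [BangD.logicalCount, seqSize, Fm.size, List.map_append, List.sum_append] at i1 ⊢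
      omega
  | contr Δ₁ Δ₂ A C d ih =>
      intro h
      have hbang : bangVar (bang A) := h _ (by simp)
      obtain ⟨n, rfl⟩ := hbang
      have h1 : ∀ F ∈ C :: (Δ₁ ++ bang (var n) :: bang (var n) :: Δ₂), bangVar F := by
        intro F hF; apply h
        simp at hF ⊢; tauto
      have i1 := ih h1
      simp [BangD.logicalCount, seqSize, Fm.size, List.map_append, List.sum_append] at i1 ⊢
      omega

/-- In any cut-free !L* derivation of a sequent of size n in which ! is applied
only to variables, the number of logical rule applications is less than n. -/
theorem stmt12 (Φ : List Fm) (C : Fm) (d : BangD Φ C)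
    (h : ∀ F ∈ C :: Φ, bangVar F) :
    d.logicalCount < seqSize Φ C := by
  have k := key d h
  have : 1 ≤ seqSize Φ C - d.logicalCount := by
    rcases Φ with _ | ⟨x, Φ⟩
    · simp at k; omega
    · simp at k; omega
  have hle : d.logicalCount < seqSize Φ C := by omega
  exact hle
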